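/- For the VarQITE gradient error e = ψ̇ + i Im(⟨ψ̇|ψ⟩)ψ − (E − H')ψ (with ψ a unit vector, E = ⟨ψ,H'ψ⟩, Re⟨ψ|ψ̇⟩ = 0), its squared norm equals Var(H')_ψ + ⟨ψ̇|ψ̇⟩ − ⟨ψ̇|ψ⟩⟨ψ|ψ̇⟩ + 2 Re⟨ψ̇, H'ψ⟩. -/

import Mathlib

/-!
Since `Re ⟪ψ, ψ̇⟫ = 0`, the coefficient `i Im ⟪ψ̇, ψ⟫` equals `-⟪ψ, ψ̇⟫`, and `E = ⟪ψ, H'ψ⟫`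
because `H'` is self-adjoint. Hence `e = x - ⟪ψ, x⟫ ψ` with `x = ψ̇ + H'ψ` is the component of `x`
orthogonal to `ψ`, and Pythagoras gives `‖e‖² = ‖x‖² - |⟪ψ, x⟫|²`. Expanding
`‖x‖² = ‖ψ̇‖² + 2 Re ⟪ψ̇, H'ψ⟫ + ⟪ψ, H'²ψ⟫` and `|⟪ψ, x⟫|² = |⟪ψ, ψ̇⟫|² + E²` (imaginary plus real
part) yields the formula.
-/

open scoped ComplexInnerProductSpace InnerProductSpace

theorem norm_sub_inner_smul_sq_of_norm_eq_one {𝕜 E : Type*} [RCLike 𝕜] [NormedAddCommGroup E]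
    [InnerProductSpace 𝕜 E] {ψ : E} (hψ : ‖ψ‖ = 1) (x : E) :
    ‖x - ⟪ψ, x⟫_𝕜 • ψ‖ ^ 2 = ‖x‖ ^ 2 - ‖⟪ψ, x⟫_𝕜‖ ^ 2 := by
  rw [@norm_sub_sq 𝕜, inner_smul_right, ← inner_conj_symm, RCLike.conj_mul, norm_smul, hψ]
  norm_cast
  rw [RCLike.norm_conj]
  ring

theorem Complex.I_mul_im_conj_eq_neg_of_re_eq_zero {z : ℂ} (hz : z.re = 0) :
    Complex.I * ((starRingEnd ℂ) z).im = -z := by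
  apply Complex.ext <;> simp [hz]

/-- Squared norm of the VarQITE gradient error
e = ψ̇ + i Im(⟨ψ̇|ψ⟩)ψ − (E − H')ψ equals
Var(H')_ψ + ⟨ψ̇|ψ̇⟩ − ⟨ψ̇|ψ⟩⟨ψ|ψ̇⟩ + 2 Re⟨ψ̇, H'ψ⟩. -/
theorem varqite_gradient_error_norm
    {H : Type*} [NormedAddCommGroup H] [InnerProductSpace ℂ H] [CompleteSpace H]
    (H' : H →L[ℂ] H) (hH : IsSelfAdjoint H')
    (ψ ψdot : H) (hψ : ‖ψ‖ = 1) (htang : (⟪ψ, ψdot⟫).re = 0)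
    (E Var : ℝ) (hE : E = (⟪ψ, H' ψ⟫).re)
    (hVar : Var = (⟪ψ, H' (H' ψ)⟫).re - E ^ 2)
    (e : H)
    (he : e = ψdot + (Complex.I * (⟪ψdot, ψ⟫).im) • ψ
        - ((E : ℂ) • ψ - H' ψ)) :
    ‖e‖ ^ 2 = Var + (⟪ψdot, ψdot⟫ - ⟪ψdot, ψ⟫ * ⟪ψ, ψdot⟫).re
        + 2 * (⟪ψdot, H' ψ⟫).re := by
  have hexp : ⟪ψ, H' ψ⟫ = (E : ℂ) := by
    rw [hE]
    exact (hH.isSymmetric.coe_re_inner_self_apply ψ).symm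
  have hcoef : Complex.I * (⟪ψdot, ψ⟫).im = -⟪ψ, ψdot⟫ := by
    rw [← inner_conj_symm, Complex.I_mul_im_conj_eq_neg_of_re_eq_zero htang]
  have he_perp : e = (ψdot + H' ψ) - ⟪ψ, ψdot + H' ψ⟫ • ψ := by
    rw [he, hcoef, inner_add_right, hexp]
    module
  have hnorm_Hψ : ‖H' ψ‖ ^ 2 = (⟪ψ, H' (H' ψ)⟫).re := by
    rw [← inner_self_eq_norm_sq (𝕜 := ℂ)]
    exact congrArg Complex.re (hH.isSymmetric ψ (H' ψ))
  have hnorm_proj : ‖⟪ψ, ψdot⟫ + (E : ℂ)‖ ^ 2 = (⟪ψdot, ψ⟫ * ⟪ψ, ψdot⟫).re + E ^ 2 := by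
    rw [← inner_conj_symm ψdot ψ, Complex.sq_norm, Complex.normSq_apply, Complex.mul_re,
      Complex.add_re, Complex.add_im, Complex.conj_re, Complex.conj_im, Complex.ofReal_re,
      Complex.ofReal_im, htang]
    ring
  rw [he_perp, norm_sub_inner_smul_sq_of_norm_eq_one hψ, @norm_add_sq ℂ, inner_add_right, hexp,
    hnorm_Hψ, hnorm_proj, Complex.sub_re, ← inner_self_eq_norm_sq (𝕜 := ℂ) ψdot, hVar]
  simp only [RCLike.re_to_complex]
  ring
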